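/- arXiv:1101.5573 — 2 statements merged into one kernel-verified Lean document; each statement's English description precedes it below -/
import Mathlib

section
/- Let $k \ge 1$ and $n$ be natural numbers and let $L$ be such that $n + k \le 2^L$. Then the 2-adic valuation of $\binom{2^L - k}{n}$ equals the 2-adic valuation of $\binom{n+k-1}{n}$. -/
private lemma digits_sum_step (x : ℕ) :
    (Nat.digits 2 x).sum = x % 2 + (Nat.digits 2 (x / 2)).sum := by
  rcases Nat.eq_zero_or_pos x with h | h
  · simp [h]
  · rw [Nat.digits_def' (by norm_num : 1 < 2) h, List.sum_cons]

private lemma digits_sum_compl : ∀ (L x : ℕ), x < 2 ^ L →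
    (Nat.digits 2 x).sum + (Nat.digits 2 (2 ^ L - 1 - x)).sum = L := by
  intro L
  induction L with
  | zero => intro x hx; interval_cases x; simp
  | succ L ih =>
    intro x hx
    have hq : x / 2 < 2 ^ L := by
      have : (2:ℕ) ^ (L+1) = 2 * 2 ^ L := by ring
      omega
    have h1 : (2 ^ (L+1) - 1 - x) % 2 = 1 - x % 2 := by
      have : (2:ℕ) ^ (L+1) = 2 * 2 ^ L := by ring
      omega
    have h2 : (2 ^ (L+1) - 1 - x) / 2 = 2 ^ L - 1 - x / 2 := by
      have : (2:ℕ) ^ (L+1) = 2 * 2 ^ L := by ring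
      omega
    have := ih (x / 2) hq
    rw [digits_sum_step x, digits_sum_step (2 ^ (L+1) - 1 - x), h1, h2]
    omega

private lemma vfac (m : ℕ) :
    padicValNat 2 (Nat.factorial m) = m - (Nat.digits 2 m).sum := by
  haveI : Fact (Nat.Prime 2) := ⟨Nat.prime_two⟩
  have := sub_one_mul_padicValNat_factorial (p := 2) m
  simpa using this

private lemma vchoose (a b : ℕ) (h : b ≤ a) :
    padicValNat 2 (a.choose b) + (b - (Nat.digits 2 b).sum)
      + ((a - b) - (Nat.digits 2 (a - b)).sum) = a - (Nat.digits 2 a).sum := by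
  haveI : Fact (Nat.Prime 2) := ⟨Nat.prime_two⟩
  have key := Nat.choose_mul_factorial_mul_factorial h
  have h1 : padicValNat 2 (a.choose b * Nat.factorial b * Nat.factorial (a - b))
      = padicValNat 2 (Nat.factorial a) := by rw [key]
  rw [padicValNat.mul (Nat.mul_ne_zero (Nat.ne_of_gt (Nat.choose_pos h)) (Nat.factorial_ne_zero _))
        (Nat.factorial_ne_zero _),
      padicValNat.mul (Nat.ne_of_gt (Nat.choose_pos h)) (Nat.factorial_ne_zero _),
      vfac, vfac, vfac] at h1
  omega

theorem nu_choose_pow_sub (k n L : ℕ) (hk : 1 ≤ k) (hL : n + k ≤ 2 ^ L) :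
    padicValNat 2 ((2 ^ L - k).choose n) =
      padicValNat 2 ((n + k - 1).choose n) := by
  have hn1 : n ≤ 2 ^ L - k := by omega
  have hn2 : n ≤ n + k - 1 := by omega
  have e1 : 2 ^ L - k - n = 2 ^ L - 1 - (n + k - 1) := by omega
  have e2 : 2 ^ L - k = 2 ^ L - 1 - (k - 1) := by omega
  have e3 : n + k - 1 - n = k - 1 := by omega
  have c1 := digits_sum_compl L (n + k - 1) (by omega)
  have c2 := digits_sum_compl L (k - 1) (by omega)
  have v1 := vchoose (2 ^ L - k) n hn1
  have v2 := vchoose (n + k - 1) n hn2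
  have s1 : (Nat.digits 2 (2 ^ L - k - n)).sum
      = (Nat.digits 2 (2 ^ L - 1 - (n + k - 1))).sum := by rw [e1]
  have s2 : (Nat.digits 2 (2 ^ L - k)).sum
      = (Nat.digits 2 (2 ^ L - 1 - (k - 1))).sum := by rw [e2]
  have s3 : (Nat.digits 2 (n + k - 1 - n)).sum
      = (Nat.digits 2 (k - 1)).sum := by rw [e3]
  have d1 := Nat.digit_sum_le 2 n
  have d2 := Nat.digit_sum_le 2 (k - 1)
  have d3 := Nat.digit_sum_le 2 (n + k - 1)
  have d4 := Nat.digit_sum_le 2 (2 ^ L - 1 - (n + k - 1))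
  have d5 := Nat.digit_sum_le 2 (2 ^ L - 1 - (k - 1))
  omega
end

section
/- Let $h \ge 1$ and let $p(h)$ denote the smallest power of 2 that is $\ge h$. If $M \ge 1$ satisfies $M \equiv 0 \pmod{p(h+1)}$, then for every $j$ with $0 \le j \le h$, the 2-adic valuation of $\binom{2M+h-j}{M-j}$ is at least $\alpha(M)$. -/
/-- α(k): number of 1's in the binary expansion of k. -/
def binaryAlpha (k : ℕ) : ℕ := (Nat.digits 2 k).sum

/-- p(h): the smallest power of 2 that is ≥ h. -/
def minPow2 (h : ℕ) : ℕ := 2 ^ Nat.clog 2 h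

def s2 (k : ℕ) : ℕ := (Nat.digits 2 k).sum

lemma s2_double (m : ℕ) : s2 (2 * m) = s2 m := by
  rcases Nat.eq_zero_or_pos m with rfl | hm
  · simp [s2]
  · have h := Nat.digits_def' (b := 2) one_lt_two (by omega : 0 < 2 * m)
    simp [s2, h, Nat.mul_div_cancel_left m (by norm_num : 0 < 2), Nat.mul_mod_right]

lemma s2_double_add_one (m : ℕ) : s2 (2 * m + 1) = s2 m + 1 := by
  have h := Nat.digits_def' (b := 2) one_lt_two (by omega : 0 < 2 * m + 1)
  have h2 : (2 * m + 1) % 2 = 1 := by omega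
  have h3 : (2 * m + 1) / 2 = m := by omega
  rw [h2, h3] at h
  unfold s2
  rw [h, List.sum_cons]
  omega

lemma s2_succ (n : ℕ) : s2 (n + 1) ≤ s2 n + 1 := by
  induction n using Nat.strong_induction_on with
  | _ n ih =>
    rcases Nat.even_or_odd n with ⟨m, hm⟩ | ⟨m, hm⟩
    · subst hm
      rw [← two_mul, s2_double_add_one, s2_double]
    · subst hm
      have : 2 * m + 1 + 1 = 2 * (m + 1) := by ring
      rw [this, s2_double, s2_double_add_one]
      rcases Nat.eq_zero_or_pos m with rfl | hm0
      · norm_num [s2]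
      · have := ih m (by omega)
        omega

lemma s2_add (a b : ℕ) : s2 (a + b) ≤ s2 a + s2 b := by
  induction a using Nat.strong_induction_on generalizing b with
  | _ a ih =>
    rcases Nat.eq_zero_or_pos a with rfl | ha
    · simp
    obtain ⟨m, hm⟩ : ∃ m, a = 2 * m ∨ a = 2 * m + 1 := ⟨a / 2, by omega⟩
    obtain ⟨k, hk⟩ : ∃ k, b = 2 * k ∨ b = 2 * k + 1 := ⟨b / 2, by omega⟩
    rcases hm with rfl | rfl <;> rcases hk with rfl | rfl
    · have h1 : 2 * m + 2 * k = 2 * (m + k) := by ring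
      rw [h1, s2_double, s2_double, s2_double]
      exact ih m (by omega) k
    · have h1 : 2 * m + (2 * k + 1) = 2 * (m + k) + 1 := by ring
      rw [h1, s2_double_add_one, s2_double, s2_double_add_one]
      have := ih m (by omega) k
      omega
    · have h1 : 2 * m + 1 + 2 * k = 2 * (m + k) + 1 := by ring
      rw [h1, s2_double_add_one, s2_double_add_one, s2_double]
      have := ih m (by omega) k
      omega
    · have h1 : 2 * m + 1 + (2 * k + 1) = 2 * (m + k + 1) := by ring
      rw [h1, s2_double, s2_double_add_one, s2_double_add_one]
      have h2 : s2 (m + (k + 1)) ≤ s2 m + s2 (k + 1) := ih m (by omega) (k + 1)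
      have h3 := s2_succ k
      have heq : m + (k + 1) = m + k + 1 := by ring
      rw [heq] at h2
      omega

lemma s2_pow_mul_add (c q r : ℕ) (hr : r < 2 ^ c) : s2 (r + 2 ^ c * q) = s2 r + s2 q := by
  rcases Nat.eq_zero_or_pos q with rfl | hq
  · simp [s2]
  have hlen : (Nat.digits 2 r).length ≤ c := by
    rcases Nat.eq_zero_or_pos r with rfl | hr0
    · simp
    · rw [Nat.digits_len 2 r one_lt_two (by omega)]
      have : Nat.log 2 r < c := (Nat.log_lt_of_lt_pow (by omega) hr)
      omega
  have key := Nat.digits_append_zeroes_append_digits (b := 2) (k := c - (Nat.digits 2 r).length)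
    (m := q) (n := r) one_lt_two hq
  have hc : (Nat.digits 2 r).length + (c - (Nat.digits 2 r).length) = c := by omega
  rw [hc] at key
  simp [s2, ← key, List.sum_append]

theorem nu_intermediate_terms (h M : ℕ) (hh : 1 ≤ h) (hM : 1 ≤ M)
    (hmod : minPow2 (h + 1) ∣ M) :
    ∀ j, j ≤ h → binaryAlpha M ≤ padicValNat 2 ((2 * M + h - j).choose (M - j)) := by
  intro j hj
  haveI : Fact (Nat.Prime 2) := ⟨Nat.prime_two⟩
  set c := Nat.clog 2 (h + 1) with hc
  have hhc : h + 1 ≤ 2 ^ c := Nat.le_pow_clog one_lt_two _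
  obtain ⟨Q, hQ⟩ := hmod
  rw [minPow2, ← hc] at hQ
  have hQpos : 1 ≤ Q := by
    rcases Nat.eq_zero_or_pos Q with rfl | h; · omega
    · exact h
  obtain ⟨Q', rfl⟩ : ∃ Q', Q = Q' + 1 := ⟨Q - 1, by omega⟩
  have hQ' : M = 2 ^ c * Q' + 2 ^ c := by rw [hQ]; ring
  have hjM : j ≤ M := by nlinarith [Nat.one_le_two_pow (n := c)]
  have key := sub_one_mul_padicValNat_choose_eq_sub_sum_digits (p := 2)
    (k := M - j) (n := 2 * M + h - j) (by omega)
  have hsub : 2 * M + h - j - (M - j) = M + h := by omega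
  rw [hsub] at key
  norm_num at key
  -- identify binaryAlpha with s2
  have hba : ∀ k, (Nat.digits 2 k).sum = s2 k := fun _ => rfl
  rw [hba, hba, hba] at key
  show s2 M ≤ _
  -- digit-sum computations
  have hM2 : s2 M = s2 (Q' + 1) := by
    have := s2_pow_mul_add c (Q' + 1) 0 (by positivity)
    rw [hQ]
    simpa [s2] using this
  have hMh : s2 (M + h) = s2 h + s2 (Q' + 1) := by
    have h1 := s2_pow_mul_add c (Q' + 1) h (by omega)
    rw [hQ, show 2 ^ c * (Q' + 1) + h = h + 2 ^ c * (Q' + 1) from by ring, h1]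
  have hbig : s2 (2 * M + h - j) = s2 (h - j) + s2 (Q' + 1) := by
    have h1 := s2_pow_mul_add c (2 * (Q' + 1)) (h - j) (by omega)
    have h2 : 2 * M + h - j = h - j + 2 ^ c * (2 * (Q' + 1)) := by
      have h3 : 2 ^ c * (2 * (Q' + 1)) = 2 * (2 ^ c * (Q' + 1)) := by ring
      rw [hQ]; omega
    rw [h2, h1, s2_double]
  rcases Nat.eq_zero_or_pos j with rfl | hj1
  · simp only [Nat.sub_zero] at key hbig hM2 hMh ⊢
    omega
  · have hMj : s2 (M - j) = s2 (2 ^ c - j) + s2 Q' := by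
      have h1 := s2_pow_mul_add c Q' (2 ^ c - j) (by omega)
      have h2 : M - j = 2 ^ c - j + 2 ^ c * Q' := by omega
      rw [h2, h1]
    have hQs : s2 (Q' + 1) ≤ s2 Q' + 1 := s2_succ Q'
    have hkey2 : 1 + s2 (h - j) ≤ s2 (2 ^ c - j) + s2 h := by
      have h1 : s2 (h - j + 2 ^ c * 1) = s2 (h - j) + s2 1 := by
        exact s2_pow_mul_add c 1 (h - j) (by omega)
      have h2 : h - j + 2 ^ c * 1 = (2 ^ c - j) + h := by omega
      have h3 := s2_add (2 ^ c - j) h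
      rw [h2] at h1
      have h4 : s2 1 = 1 := by norm_num [s2]
      omega
    omega
end
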